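/- Let L be a Hermitian Mackey functor and Mₙ(L) the matrix Hermitian Mackey functor. For the action of Mₙ(L(ℤ/2)) on Mₙ(L)(*), the compatibility with restriction holds: R(A•B) = A·R(B)·w(A) in Mₙ(L(ℤ/2)), where w(A) is the conjugate transpose of A. -/

import Mathlib

/-- A Hermitian ℤ/2-Mackey functor: a ring `U = L(ℤ/2)` with anti-involution `w`,
an abelian group `F = L(*)`, restriction `R`, transfer `T` with `R (T a) = a + w a`,
and a multiplicative left action `act` of `U` on `F`. -/
structure HermitianMackey (U F : Type) [Ring U] [AddCommGroup F] where
  w : U → U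
  w_add : ∀ a a' : U, w (a + a') = w a + w a'
  w_invol : ∀ a : U, w (w a) = a
  w_mul : ∀ a a' : U, w (a * a') = w a' * w a
  w_one : w 1 = 1
  R : F → U
  R_add : ∀ b b' : F, R (b + b') = R b + R b'
  R_equiv : ∀ b : F, w (R b) = R b
  T : U → F
  T_add : ∀ a a' : U, T (a + a') = T a + T a'
  T_equiv : ∀ a : U, T (w a) = T a
  RT : ∀ a : U, R (T a) = a + w a
  act : U → F → F
  act_add : ∀ (a : U) (b b' : F), act a (b + b') = act a b + act a b'
  act_mul : ∀ (a a' : U) (b : F), act (a * a') b = act a (act a' b)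
  act_one : ∀ b : F, act 1 b = b
  R_act : ∀ (a : U) (b : F), R (act a b) = a * R b * w a
  act_T : ∀ a c : U, act a (T c) = T (a * c * w a)
  add_act : ∀ (a a' : U) (b : F),
    act (a + a') b = act a b + act a' b + T (a * R b * w a')
  zero_act : ∀ b : F, act 0 b = 0

variable {U F : Type} [Ring U] [AddCommGroup F]

/-- The conjugate transpose `w(A)ᵢⱼ = w(Aⱼᵢ)`, the anti-involution of `Mₙ(L)(ℤ/2)`. -/
def conjT (L : HermitianMackey U F) {n : ℕ} (A : Matrix (Fin n) (Fin n) U) :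
    Matrix (Fin n) (Fin n) U :=
  Matrix.of fun i j => L.w (A j i)

/-- The restriction `R : Mₙ(L)(*) → Mₙ(L(ℤ/2))`. An element of `Mₙ(L)(*)` is
recorded as a pair `(Boff, Bdiag)`: the entries `Boff i j` for `i < j` lie in
`L(ℤ/2)` and the diagonal entries `Bdiag i` lie in `L(*)`; the restriction fills
in the lower entries via the involution `w`. -/
def mRest (L : HermitianMackey U F) {n : ℕ}
    (Boff : Fin n → Fin n → U) (Bdiag : Fin n → F) :
    Matrix (Fin n) (Fin n) U :=
  Matrix.of fun i j =>
    if i < j then Boff i j else if j < i then L.w (Boff j i) else L.R (Bdiag i)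

/-- Off-diagonal part of the matrix transfer `T : Mₙ(L(ℤ/2)) → Mₙ(L)(*)`:
`T(A)ᵢⱼ = Aᵢⱼ + w(Aⱼᵢ)` for `i < j`. -/
def mTransOff (L : HermitianMackey U F) {n : ℕ} (A : Matrix (Fin n) (Fin n) U) :
    Fin n → Fin n → U :=
  fun i j => A i j + L.w (A j i)

/-- Diagonal part of the matrix transfer: `T(A)ᵢᵢ = T(Aᵢᵢ)`. -/
def mTransDiag (L : HermitianMackey U F) {n : ℕ} (A : Matrix (Fin n) (Fin n) U) :
    Fin n → F :=
  fun i => L.T (A i i)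

/-- Off-diagonal part of the action of `Mₙ(L(ℤ/2))` on `Mₙ(L)(*)`:
`(A • B)ᵢⱼ = (A · R(B) · w(A))ᵢⱼ` for `i < j`. -/
def mActOff (L : HermitianMackey U F) {n : ℕ} (A : Matrix (Fin n) (Fin n) U)
    (Boff : Fin n → Fin n → U) (Bdiag : Fin n → F) : Fin n → Fin n → U :=
  fun i j => (A * mRest L Boff Bdiag * conjT L A) i j

/-- Diagonal part of the action of `Mₙ(L(ℤ/2))` on `Mₙ(L)(*)`:
`(A • B)ᵢᵢ = T(Σ_{k<l} Aᵢₖ · R(B)ₖₗ · w(Aᵢₗ)) + Σₖ Aᵢₖ • Bₖₖ`. -/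
def mActDiag (L : HermitianMackey U F) {n : ℕ} (A : Matrix (Fin n) (Fin n) U)
    (Boff : Fin n → Fin n → U) (Bdiag : Fin n → F) : Fin n → F :=
  fun i =>
    (∑ k : Fin n, ∑ l : Fin n,
        if k < l then L.T (A i k * mRest L Boff Bdiag k l * L.w (A i l)) else 0)
      + ∑ k : Fin n, L.act (A i k) (Bdiag k)

/-! Above the diagonal the identity is the definition of the action; below it, it is the
Hermitian symmetry `w(A R(B) w(A)) = A R(B) w(A)` inherited from `R(B)`. On the diagonal,
`R ∘ T = 1 + w` turns each transfer term `T(xₖₗ)`, `k < l`, of `(A • B)ᵢᵢ` into `xₖₗ + xₗₖ`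
with `xₖₗ = Aᵢₖ R(B)ₖₗ w(Aᵢₗ)`, while `R(a • b) = a R(b) w(a)` supplies the terms `xₖₖ`. -/

theorem Finset.sum_sum_eq_sum_lt_add_sum_diag {ι M : Type*} [Fintype ι] [LinearOrder ι]
    [AddCommMonoid M] (g : ι → ι → M) :
    ∑ k, ∑ l, g k l = (∑ k, ∑ l, if k < l then g k l + g l k else 0) + ∑ k, g k k := by
  have hsplit : ∀ k l, g k l =
      ((if k < l then g k l else 0) + if l < k then g k l else 0) + if k = l then g k l else 0 := by
    intro k l
    rcases lt_trichotomy k l with h | rfl | h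
    · simp [h, h.asymm, h.ne]
    · simp
    · simp [h, h.asymm, h.ne']
  have hswap : ∑ k, ∑ l, (if l < k then g k l else 0) = ∑ k, ∑ l, if k < l then g l k else 0 :=
    Finset.sum_comm
  simp_rw [ite_add_zero]
  conv_lhs => rw [Finset.sum_congr rfl fun k _ => Finset.sum_congr rfl fun l _ => hsplit k l]
  simp only [Finset.sum_add_distrib, hswap, Finset.sum_ite_eq, Finset.mem_univ, if_true]

namespace HermitianMackey

variable (L : HermitianMackey U F) {n : ℕ}

theorem w_sum {ι : Type*} (s : Finset ι) (f : ι → U) : L.w (∑ x ∈ s, f x) = ∑ x ∈ s, L.w (f x) :=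
  map_sum (AddMonoidHom.mk' L.w L.w_add) f s

theorem R_sum {ι : Type*} (s : Finset ι) (f : ι → F) : L.R (∑ x ∈ s, f x) = ∑ x ∈ s, L.R (f x) :=
  map_sum (AddMonoidHom.mk' L.R L.R_add) f s

theorem R_zero : L.R 0 = 0 :=
  (AddMonoidHom.mk' L.R L.R_add).map_zero

theorem w_mul_mul_w (a b c : U) : L.w (a * b * L.w c) = c * L.w b * L.w a := by
  rw [L.w_mul, L.w_mul, L.w_invol, mul_assoc]

theorem conjT_conjT (A : Matrix (Fin n) (Fin n) U) : conjT L (conjT L A) = A := by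
  ext i j
  simp [conjT, L.w_invol]

theorem conjT_mul (A B : Matrix (Fin n) (Fin n) U) :
    conjT L (A * B) = conjT L B * conjT L A := by
  ext i j
  simp [conjT, Matrix.mul_apply, L.w_sum, L.w_mul]

theorem conjT_mul_mul_conjT {A S : Matrix (Fin n) (Fin n) U} (hS : conjT L S = S) :
    conjT L (A * S * conjT L A) = A * S * conjT L A := by
  rw [L.conjT_mul, L.conjT_mul, L.conjT_conjT, hS, mul_assoc]

theorem mul_mul_conjT_apply (A S : Matrix (Fin n) (Fin n) U) (i j : Fin n) :
    (A * S * conjT L A) i j = ∑ k, ∑ l, A i k * S k l * L.w (A j l) := by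
  simp only [Matrix.mul_apply, conjT, Matrix.of_apply, Finset.sum_mul]
  exact Finset.sum_comm

variable (Boff : Fin n → Fin n → U) (Bdiag : Fin n → F)

theorem mRest_apply_of_lt {i j : Fin n} (h : i < j) : mRest L Boff Bdiag i j = Boff i j := by
  simp [mRest, h]

theorem mRest_apply_of_gt {i j : Fin n} (h : j < i) :
    mRest L Boff Bdiag i j = L.w (Boff j i) := by
  simp [mRest, h, h.not_gt]

theorem mRest_apply_self (i : Fin n) : mRest L Boff Bdiag i i = L.R (Bdiag i) := by
  simp [mRest]

theorem conjT_mRest : conjT L (mRest L Boff Bdiag) = mRest L Boff Bdiag := by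
  ext k l
  simp only [conjT, Matrix.of_apply]
  rcases lt_trichotomy k l with h | rfl | h
  · rw [L.mRest_apply_of_gt _ _ h, L.mRest_apply_of_lt _ _ h, L.w_invol]
  · rw [L.mRest_apply_self, L.R_equiv]
  · rw [L.mRest_apply_of_lt _ _ h, L.mRest_apply_of_gt _ _ h]

theorem w_mRest (k l : Fin n) : L.w (mRest L Boff Bdiag k l) = mRest L Boff Bdiag l k :=
  congrFun₂ (L.conjT_mRest Boff Bdiag) l k

theorem R_mActDiag (A : Matrix (Fin n) (Fin n) U) (i : Fin n) :
    let x k l := A i k * mRest L Boff Bdiag k l * L.w (A i l)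
    L.R (mActDiag L A Boff Bdiag i) =
      (∑ k, ∑ l, if k < l then x k l + x l k else 0) + ∑ k, x k k := by
  intro x
  have hx : ∀ k l, L.w (x k l) = x l k := fun k l => by
    simp only [x, L.w_mul_mul_w, L.w_mRest]
  simp only [mActDiag]
  rw [L.R_add, L.R_sum, L.R_sum]
  congr 1
  · refine Finset.sum_congr rfl fun k _ => ?_
    rw [L.R_sum]
    refine Finset.sum_congr rfl fun l _ => ?_
    split_ifs
    · rw [L.RT, hx]
    · exact L.R_zero
  · refine Finset.sum_congr rfl fun k _ => ?_
    rw [L.R_act, ← L.mRest_apply_self Boff]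

end HermitianMackey

/-- compatibility of the matrix action with the restriction:
`R(A • B) = A · R(B) · w(A)` in `Mₙ(L(ℤ/2))`. -/
theorem matrix_action_restriction {U F : Type} [Ring U] [AddCommGroup F]
    (L : HermitianMackey U F) (n : ℕ)
    (A : Matrix (Fin n) (Fin n) U)
    (Boff : Fin n → Fin n → U) (Bdiag : Fin n → F) (i j : Fin n) :
    mRest L (mActOff L A Boff Bdiag) (mActDiag L A Boff Bdiag) i j =
      (A * mRest L Boff Bdiag * conjT L A) i j := by
  rcases lt_trichotomy i j with h | rfl | h
  · exact L.mRest_apply_of_lt _ _ h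
  · rw [L.mRest_apply_self, L.R_mActDiag, L.mul_mul_conjT_apply]
    exact (Finset.sum_sum_eq_sum_lt_add_sum_diag _).symm
  · rw [L.mRest_apply_of_gt _ _ h]
    exact congrFun₂ (L.conjT_mul_mul_conjT (L.conjT_mRest Boff Bdiag)) i j
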